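/- Let T = T₀ ⊕ T₁ be a superalgebra over a field of characteristic 0 and let G(T) = G₀⊗T₀ ⊕ G₁⊗T₁ be its Grassmann envelope. Then G(T) is an anti-commutative algebra satisfying the Tortkara identity (ab)(cd) + (ad)(cb) = J(a,b,c)d + J(a,d,c)b (with J(x,y,z) = (xy)z + (yz)x + (zx)y) if and only if T satisfies super anti-commutativity ab = −(−1)^{|a||b|}ba and the super Tortkara identity (ab)(cd) − (−1)^{|d|(|b|+|c|)}(ad)(bc) = J_s(a,b,c)d + (−1)^{|a||b|}b J_s(a,c,d) for homogeneous a, b, c, d, where J_s(x,y,z) = (xy)z − x(yz) − (−1)^{|y||z|}(xz)y. -/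

import Mathlib

/-!
For `g, h` in the Grassmann algebra `G` and `a, b ∈ T` the envelope product is
`(g ⊗ a)(h ⊗ b) = gh ⊗ ab`, and `G` is supercommutative: `gh = (-1)^{|g||h|} hg` for homogeneous
`g, h`. So on homogeneous tensors `gₐ ⊗ a, g_b ⊗ b, …` every term of the anticommutator, resp.
of the Tortkara defect, becomes `gₐ g_b ⋯ ⊗ (term in T)` after reordering the Grassmann factors,
and the reordering signs are exactly the Koszul signs of the super identities: the envelope
anticommutator is `gₐ g_b ⊗` the super anticommutator, and, once `T` is super anticommutative,
the envelope Tortkara defect is `gₐ g_b g_c g_d ⊗` the super Tortkara defect. Both defects are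
multilinear and `G(T)` is spanned by homogeneous tensors, so the super identities imply the
envelope identities. Conversely, choosing `g = 1` for even and pairwise distinct generators
`g = ξₙ` for odd entries makes `gₐ g_b ⋯` nonzero, and the factor can be cancelled.
-/

open TensorProduct

noncomputable section

/-- The Grassmann algebra on countably many generators, realized as the exterior
algebra (Clifford algebra of the zero quadratic form) on a countably-infinite
dimensional space, with its `ZMod 2`-grading `CliffordAlgebra.evenOdd 0`. -/
abbrev Grass (K : Type*) [Field K] := CliffordAlgebra (0 : QuadraticForm K (ℕ →₀ K))

/-- The bilinear product on `G ⊗ T` given by `(g⊗t)(g'⊗t') = gg' ⊗ tt'`. -/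
def envMul {K T : Type*} [Field K] [AddCommGroup T] [Module K T]
    (mul : T →ₗ[K] T →ₗ[K] T) :
    (Grass K ⊗[K] T) →ₗ[K] (Grass K ⊗[K] T) →ₗ[K] (Grass K ⊗[K] T) :=
  TensorProduct.curry
    ((TensorProduct.map (LinearMap.mul' K (Grass K)) (TensorProduct.lift mul)) ∘ₗ
      (TensorProduct.tensorTensorTensorComm K (Grass K) T (Grass K) T).toLinearMap)

/-- The Grassmann envelope `G(T) = G₀⊗T₀ ⊕ G₁⊗T₁` as a submodule of `G ⊗ T`. -/
def grassEnv {K T : Type*} [Field K] [AddCommGroup T] [Module K T]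
    (grade : ZMod 2 → Submodule K T) : Submodule K (Grass K ⊗[K] T) :=
  LinearMap.range (TensorProduct.map
      (CliffordAlgebra.evenOdd (0 : QuadraticForm K (ℕ →₀ K)) 0).subtype
      (grade 0).subtype) ⊔
  LinearMap.range (TensorProduct.map
      (CliffordAlgebra.evenOdd (0 : QuadraticForm K (ℕ →₀ K)) 1).subtype
      (grade 1).subtype)

/-- The Jacobian of the envelope product. -/
def envJ {K T : Type*} [Field K] [AddCommGroup T] [Module K T]
    (mul : T →ₗ[K] T →ₗ[K] T) (a b c : Grass K ⊗[K] T) : Grass K ⊗[K] T :=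
  envMul mul (envMul mul a b) c + envMul mul (envMul mul b c) a +
    envMul mul (envMul mul c a) b

namespace GrassmannEnvelope

lemma zmod_two_eq_zero_or_eq_one : ∀ i : ZMod 2, i = 0 ∨ i = 1 := by decide

section Sign

variable (R : Type*) [Ring R]

def koszulSign (i j : ZMod 2) : R := (-1) ^ (i.val * j.val)

variable {R}

@[simp] lemma koszulSign_zero_left (j : ZMod 2) : koszulSign R 0 j = 1 := by simp [koszulSign]

@[simp] lemma koszulSign_zero_right (i : ZMod 2) : koszulSign R i 0 = 1 := by simp [koszulSign]

@[simp] lemma koszulSign_one_one : koszulSign R 1 1 = -1 := by simp [koszulSign, ZMod.val_one]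

lemma koszulSign_comm (i j : ZMod 2) : koszulSign R i j = koszulSign R j i := by
  rw [koszulSign, koszulSign, Nat.mul_comm]

lemma koszulSign_mul_self (i j : ZMod 2) : koszulSign R i j * koszulSign R i j = 1 := by
  rw [koszulSign, ← pow_add, ← two_mul, pow_mul, neg_one_sq, one_pow]

end Sign

section ExteriorAlgebra

variable {R M : Type*} [CommRing R] [AddCommGroup M] [Module R M]

local notation "𝒢" => CliffordAlgebra.evenOdd (0 : QuadraticForm R M)

theorem exteriorAlgebra_mul_comm_of_mem_evenOdd {i j : ZMod 2} {x y : ExteriorAlgebra R M}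
    (hx : x ∈ 𝒢 i) (hy : y ∈ 𝒢 j) : x * y = koszulSign R i j • (y * x) := by
  have h := CliffordAlgebra.map_mul_map_of_isOrtho_of_mem_evenOdd
    (QuadraticMap.Isometry.id _) (QuadraticMap.Isometry.id _)
    (fun _ _ => QuadraticMap.isOrtho_def.mpr (by simp)) x y hx hy
  rw [CliffordAlgebra.map_id, AlgHom.id_apply, AlgHom.id_apply] at h
  rw [h]
  rcases zmod_two_eq_zero_or_eq_one i with rfl | rfl <;>
    rcases zmod_two_eq_zero_or_eq_one j with rfl | rfl <;> simp

theorem ιMulti_single_ne_zero [Nontrivial R] {σ : Type*} {m : ℕ} {ns : Fin m → σ}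
    (hns : Function.Injective ns) :
    ExteriorAlgebra.ιMulti R m (fun i => Finsupp.single (ns i) (1 : R)) ≠ 0 := by
  classical
  -- the determinant of the coordinates at `ns` is an alternating form that is `1` on the product
  let det : (σ →₀ R) [⋀^Fin m]→ₗ[R] R :=
    Matrix.detRowAlternating.compLinearMap (LinearMap.pi fun i => Finsupp.lapply (ns i))
  have hdet : ExteriorAlgebra.liftAlternating (Function.update 0 m det)
      (ExteriorAlgebra.ιMulti R m fun i => Finsupp.single (ns i) 1) = 1 := by
    rw [ExteriorAlgebra.liftAlternating_apply_ιMulti, Function.update_self]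
    have hId : Matrix.of (fun i j => Finsupp.single (ns i) (1 : R) (ns j)) = 1 := by
      ext i j
      simp [Matrix.one_apply, Finsupp.single_apply, hns.eq_iff]
    change Matrix.det (Matrix.of fun i j => Finsupp.single (ns i) (1 : R) (ns j)) = 1
    rw [hId, Matrix.det_one]
  intro h
  simp [h] at hdet

end ExteriorAlgebra

section Witnesses

variable (R : Type*) [CommRing R]

local notation "𝒢" => CliffordAlgebra.evenOdd (0 : QuadraticForm R (ℕ →₀ R))

def parityGen (p : ZMod 2) (n : ℕ) : ExteriorAlgebra R (ℕ →₀ R) :=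
  if p = 0 then 1 else ExteriorAlgebra.ι R (Finsupp.single n 1)

variable {R}

@[simp] lemma parityGen_zero (n : ℕ) : parityGen R 0 n = 1 := if_pos rfl

@[simp] lemma parityGen_one (n : ℕ) :
    parityGen R 1 n = ExteriorAlgebra.ι R (Finsupp.single n 1) := if_neg one_ne_zero

lemma parityGen_mem (p : ZMod 2) (n : ℕ) : parityGen R p n ∈ 𝒢 p := by
  rcases zmod_two_eq_zero_or_eq_one p with rfl | rfl
  · simpa using SetLike.one_mem_graded 𝒢
  · simpa using CliffordAlgebra.ι_mem_evenOdd_one _ _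

lemma prod_map_parityGen (par : ℕ → ZMod 2) (L : List ℕ) :
    (L.map fun n => parityGen R (par n) n).prod =
      ((L.filter (par · = 1)).map fun n => ExteriorAlgebra.ι R (Finsupp.single n 1)).prod := by
  induction L with
  | nil => simp
  | cons n L ih => rcases zmod_two_eq_zero_or_eq_one (par n) with h | h <;> simp [h, ih]

lemma prod_map_ι_single_ne_zero [Nontrivial R] {L : List ℕ} (hL : L.Nodup) :
    (L.map fun n => ExteriorAlgebra.ι R (Finsupp.single n (1 : R))).prod ≠ 0 := by
  have h := ιMulti_single_ne_zero (R := R) (List.nodup_iff_injective_getElem.mp hL)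
  rwa [ExteriorAlgebra.ιMulti_apply,
    List.ofFn_getElem_eq_map L (fun n => ExteriorAlgebra.ι R (Finsupp.single n 1))] at h

lemma parityGen_mul₄_ne_zero [Nontrivial R] (i j k l : ZMod 2) :
    parityGen R i 0 * parityGen R j 1 * parityGen R k 2 * parityGen R l 3 ≠ 0 := by
  have h := prod_map_parityGen (R := R) (fun n => [i, j, k, l].getD n 0) [0, 1, 2, 3]
  simp only [List.map_cons, List.map_nil, List.prod_cons, List.prod_nil, mul_one,
    List.getD_cons_zero, List.getD_cons_succ] at h
  rw [mul_assoc, mul_assoc, h]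
  exact prod_map_ι_single_ne_zero (List.Nodup.filter _ (by decide))

lemma parityGen_mul_ne_zero [Nontrivial R] (i j : ZMod 2) :
    parityGen R i 0 * parityGen R j 1 ≠ 0 := by
  simpa using parityGen_mul₄_ne_zero (R := R) i j 0 0

end Witnesses

lemma eq_zero_of_tmul_eq_zero {K V W : Type*} [Field K] [AddCommGroup V] [Module K V]
    [AddCommGroup W] [Module K W] {v : V} (hv : v ≠ 0) {w : W} (h : v ⊗ₜ[K] w = 0) : w = 0 := by
  obtain ⟨φ, hφ⟩ : ∃ φ : Module.Dual K V, φ v ≠ 0 := by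
    by_contra! hφ
    exact hv ((Module.forall_dual_apply_eq_zero_iff K v).mp hφ)
  have hφw : φ v • w = 0 := by
    simpa using congrArg (TensorProduct.lid K W ∘ LinearMap.rTensor W φ) h
  exact (smul_eq_zero.mp hφw).resolve_left hφ

section Bilinear

variable {K M N : Type*} [CommRing K] [AddCommGroup M] [Module K M] [AddCommGroup N] [Module K N]
  (E : M →ₗ[K] M →ₗ[K] M)

def jacobian (a b c : M) : M := E (E a b) c + E (E b c) a + E (E c a) b

def tortkaraDefect (a b c d : M) : M :=
  E (E a b) (E c d) + E (E a d) (E c b) - (E (jacobian E a b c) d + E (jacobian E a d c) b)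

def IsAntiCommOn (V : Submodule K M) : Prop := ∀ a ∈ V, ∀ b ∈ V, E a b = -E b a

def IsTortkaraOn (V : Submodule K M) : Prop :=
  ∀ a ∈ V, ∀ b ∈ V, ∀ c ∈ V, ∀ d ∈ V,
    E (E a b) (E c d) + E (E a d) (E c b) = E (jacobian E a b c) d + E (jacobian E a d c) b

lemma tortkaraDefect_isLinearMap (a b c d : M) :
    IsLinearMap K (tortkaraDefect E · b c d) ∧ IsLinearMap K (tortkaraDefect E a · c d) ∧
      IsLinearMap K (tortkaraDefect E a b · d) ∧ IsLinearMap K (tortkaraDefect E a b c ·) := by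
  refine ⟨⟨?_, ?_⟩, ⟨?_, ?_⟩, ⟨?_, ?_⟩, ⟨?_, ?_⟩⟩ <;> intros <;>
    simp only [tortkaraDefect, jacobian, map_add, map_smul, LinearMap.add_apply,
      LinearMap.smul_apply] <;>
    module

variable {S : Set M}

lemma eq_zero_of_mem_span_of_isLinearMap {f : M → N} (hf : IsLinearMap K f)
    (h : ∀ x ∈ S, f x = 0) {x : M} (hx : x ∈ Submodule.span K S) : f x = 0 :=
  Submodule.span_le.mpr (show S ⊆ LinearMap.ker (IsLinearMap.mk' f hf) from h) hx

lemma add_swap_eq_zero_of_mem_span (h : ∀ a ∈ S, ∀ b ∈ S, E a b + E b a = 0) {a b : M}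
    (ha : a ∈ Submodule.span K S) (hb : b ∈ Submodule.span K S) : E a b + E b a = 0 := by
  have hS : ∀ a ∈ S, E a b + E b a = 0 := fun a ha' =>
    eq_zero_of_mem_span_of_isLinearMap (E a + E.flip a).isLinear (h a ha') hb
  exact eq_zero_of_mem_span_of_isLinearMap (E.flip b + E b).isLinear hS ha

lemma tortkaraDefect_eq_zero_of_mem_span
    (h : ∀ a ∈ S, ∀ b ∈ S, ∀ c ∈ S, ∀ d ∈ S, tortkaraDefect E a b c d = 0) {a b c d : M}
    (ha : a ∈ Submodule.span K S) (hb : b ∈ Submodule.span K S) (hc : c ∈ Submodule.span K S)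
    (hd : d ∈ Submodule.span K S) : tortkaraDefect E a b c d = 0 := by
  have lin := tortkaraDefect_isLinearMap E
  have h₄ : ∀ a ∈ S, ∀ b ∈ S, ∀ c ∈ S, tortkaraDefect E a b c d = 0 := fun a ha b hb c hc =>
    eq_zero_of_mem_span_of_isLinearMap (lin a b c d).2.2.2 (h a ha b hb c hc) hd
  have h₃ : ∀ a ∈ S, ∀ b ∈ S, tortkaraDefect E a b c d = 0 := fun a ha b hb =>
    eq_zero_of_mem_span_of_isLinearMap (lin a b c d).2.2.1 (h₄ a ha b hb) hc
  have h₂ : ∀ a ∈ S, tortkaraDefect E a b c d = 0 := fun a ha =>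
    eq_zero_of_mem_span_of_isLinearMap (lin a b c d).2.1 (h₃ a ha) hb
  exact eq_zero_of_mem_span_of_isLinearMap (lin a b c d).1 h₂ ha

end Bilinear

section SuperAlgebra

variable {K T : Type*} [CommRing K] [AddCommGroup T] [Module K T]
  (grade : ZMod 2 → Submodule K T) (mul : T →ₗ[K] T →ₗ[K] T)

def superJacobian (j k : ZMod 2) (a b c : T) : T :=
  mul (mul a b) c - mul a (mul b c) - koszulSign K j k • mul (mul a c) b

def superCyclicJacobian (i j k : ZMod 2) (a b c : T) : T :=
  mul (mul a b) c + koszulSign K (j + k) i • mul (mul b c) a +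
    (koszulSign K k i * koszulSign K k j) • mul (mul c a) b

def superTortkaraDefect (i j k l : ZMod 2) (a b c d : T) : T :=
  mul (mul a b) (mul c d) - koszulSign K l (j + k) • mul (mul a d) (mul b c) -
    (mul (superJacobian mul j k a b c) d + koszulSign K i j • mul b (superJacobian mul k l a c d))

def IsSuperAntiComm : Prop :=
  ∀ i j : ZMod 2, ∀ a ∈ grade i, ∀ b ∈ grade j, mul a b = -(koszulSign K i j • mul b a)

def IsSuperTortkara : Prop :=
  ∀ i j k l : ZMod 2, ∀ a ∈ grade i, ∀ b ∈ grade j, ∀ c ∈ grade k, ∀ d ∈ grade l,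
    mul (mul a b) (mul c d) - koszulSign K l (j + k) • mul (mul a d) (mul b c) =
      mul (superJacobian mul j k a b c) d + koszulSign K i j • mul b (superJacobian mul k l a c d)

variable {grade mul}
variable (hgr : ∀ i j : ZMod 2, ∀ a ∈ grade i, ∀ b ∈ grade j, mul a b ∈ grade (i + j))
  (hanti : IsSuperAntiComm grade mul)
variable {i j k l : ZMod 2} {a b c d : T}

include hgr in
lemma superJacobian_mem (ha : a ∈ grade i) (hb : b ∈ grade j) (hc : c ∈ grade k) :
    superJacobian mul j k a b c ∈ grade (i + j + k) := by
  refine sub_mem (sub_mem (hgr _ _ _ (hgr _ _ _ ha _ hb) _ hc) ?_) (Submodule.smul_mem _ _ ?_)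
  · rw [add_assoc]
    exact hgr _ _ _ ha _ (hgr _ _ _ hb _ hc)
  · rw [add_right_comm]
    exact hgr _ _ _ (hgr _ _ _ ha _ hc) _ hb

include hanti in
lemma superJacobian_swap (hc : c ∈ grade k) (hd : d ∈ grade l) :
    superJacobian mul l k a d c = -(koszulSign K k l • superJacobian mul k l a c d) := by
  rw [superJacobian, superJacobian, hanti l k d hd c hc, koszulSign_comm l k]
  simp only [map_neg, map_smul, smul_sub, smul_smul, koszulSign_mul_self, one_smul]
  abel

include hgr hanti in
lemma superCyclicJacobian_eq_superJacobian (ha : a ∈ grade i) (hb : b ∈ grade j)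
    (hc : c ∈ grade k) : superCyclicJacobian mul i j k a b c = superJacobian mul j k a b c := by
  rw [superCyclicJacobian, superJacobian, hanti _ _ _ (hgr _ _ _ hb _ hc) a ha,
    hanti k i c hc a ha, koszulSign_comm k j]
  simp only [map_neg, map_smul, LinearMap.neg_apply, LinearMap.smul_apply]
  match_scalars
  · rfl
  · linear_combination -(koszulSign_mul_self (R := K) (j + k) i)
  · linear_combination -(koszulSign K j k) * koszulSign_mul_self (R := K) k i

end SuperAlgebra

section Envelope

variable {K T : Type*} [Field K] [AddCommGroup T] [Module K T]
  {grade : ZMod 2 → Submodule K T} (mul : T →ₗ[K] T →ₗ[K] T)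

local notation "𝒢" => CliffordAlgebra.evenOdd (0 : QuadraticForm K (ℕ →₀ K))

variable (grade) in
def homogeneousTensors : Set (Grass K ⊗[K] T) :=
  {z | ∃ p : ZMod 2, ∃ g ∈ 𝒢 p, ∃ t ∈ grade p, g ⊗ₜ t = z}

variable (grade) in
lemma grassEnv_eq_span : grassEnv grade = Submodule.span K (homogeneousTensors grade) := by
  rw [grassEnv, range_map_eq_span_tmul, range_map_eq_span_tmul, ← Submodule.span_union]
  congr 1
  ext z
  simp only [Set.mem_union, Set.mem_ofPred_eq, homogeneousTensors, Submodule.coe_subtype,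
    Subtype.exists]
  constructor
  · rintro (⟨g, hg, t, ht, rfl⟩ | ⟨g, hg, t, ht, rfl⟩)
    exacts [⟨0, g, hg, t, ht, rfl⟩, ⟨1, g, hg, t, ht, rfl⟩]
  · rintro ⟨p, g, hg, t, ht, rfl⟩
    rcases zmod_two_eq_zero_or_eq_one p with rfl | rfl
    exacts [Or.inl ⟨g, hg, t, ht, rfl⟩, Or.inr ⟨g, hg, t, ht, rfl⟩]

lemma tmul_mem_grassEnv {p : ZMod 2} {g : Grass K} {t : T} (hg : g ∈ 𝒢 p) (ht : t ∈ grade p) :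
    g ⊗ₜ t ∈ grassEnv grade := by
  rw [grassEnv_eq_span]
  exact Submodule.subset_span ⟨p, g, hg, t, ht, rfl⟩

lemma envMul_tmul (g g' : Grass K) (t t' : T) :
    envMul mul (g ⊗ₜ t) (g' ⊗ₜ t') = (g * g') ⊗ₜ[K] mul t t' := by
  simp [envMul, TensorProduct.curry_apply, tensorTensorTensorComm_tmul]

variable {i j k l : ZMod 2} {x y z w : Grass K}

lemma envMul_add_envMul_swap_tmul (hx : x ∈ 𝒢 i) (hy : y ∈ 𝒢 j) (a b : T) :
    envMul mul (x ⊗ₜ a) (y ⊗ₜ b) + envMul mul (y ⊗ₜ b) (x ⊗ₜ a) =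
      (x * y) ⊗ₜ[K] (mul a b + koszulSign K i j • mul b a) := by
  rw [envMul_tmul, envMul_tmul, exteriorAlgebra_mul_comm_of_mem_evenOdd hy hx, koszulSign_comm,
    smul_tmul, tmul_add]

lemma jacobian_envMul_tmul (hx : x ∈ 𝒢 i) (hy : y ∈ 𝒢 j) (hz : z ∈ 𝒢 k) (a b c : T) :
    jacobian (envMul mul) (x ⊗ₜ a) (y ⊗ₜ b) (z ⊗ₜ c) =
      (x * y * z) ⊗ₜ[K] superCyclicJacobian mul i j k a b c := by
  have hyzx : y * z * x = koszulSign K (j + k) i • (x * y * z) := by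
    rw [exteriorAlgebra_mul_comm_of_mem_evenOdd (SetLike.mul_mem_graded hy hz) hx, mul_assoc]
  have hzxy : z * x * y = (koszulSign K k i * koszulSign K k j) • (x * y * z) := by
    rw [exteriorAlgebra_mul_comm_of_mem_evenOdd hz hx, smul_mul_assoc, mul_assoc,
      exteriorAlgebra_mul_comm_of_mem_evenOdd hz hy, mul_smul_comm, smul_smul, mul_assoc]
  simp only [jacobian, envMul_tmul, hyzx, hzxy, superCyclicJacobian, tmul_add, smul_tmul]

lemma tortkaraDefect_envMul_tmul (hx : x ∈ 𝒢 i) (hy : y ∈ 𝒢 j) (hz : z ∈ 𝒢 k) (hw : w ∈ 𝒢 l)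
    (a b c d : T) :
    tortkaraDefect (envMul mul) (x ⊗ₜ a) (y ⊗ₜ b) (z ⊗ₜ c) (w ⊗ₜ d) =
      (x * y * z * w) ⊗ₜ[K] (mul (mul a b) (mul c d) +
        (koszulSign K l (k + j) * koszulSign K k j) • mul (mul a d) (mul c b) -
        (mul (superCyclicJacobian mul i j k a b c) d +
          (koszulSign K l (k + j) * koszulSign K k j) •
            mul (superCyclicJacobian mul i l k a d c) b)) := by
  have hxwzy :
      x * w * z * y = (koszulSign K l (k + j) * koszulSign K k j) • (x * y * z * w) := by
    rw [mul_assoc, mul_assoc,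
      exteriorAlgebra_mul_comm_of_mem_evenOdd hw (SetLike.mul_mem_graded hz hy),
      exteriorAlgebra_mul_comm_of_mem_evenOdd hz hy]
    simp only [smul_mul_assoc, mul_smul_comm, smul_smul, mul_assoc]
  simp only [tortkaraDefect, jacobian_envMul_tmul mul hx hy hz, jacobian_envMul_tmul mul hx hw hz,
    envMul_tmul, ← mul_assoc, hxwzy, tmul_add, tmul_sub, smul_tmul]

variable (hgr : ∀ i j : ZMod 2, ∀ a ∈ grade i, ∀ b ∈ grade j, mul a b ∈ grade (i + j))
  (hanti : IsSuperAntiComm grade mul)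

include hgr hanti in
lemma tortkaraDefect_envMul_tmul_of_isSuperAntiComm (hx : x ∈ 𝒢 i) (hy : y ∈ 𝒢 j)
    (hz : z ∈ 𝒢 k) (hw : w ∈ 𝒢 l) {a b c d : T} (ha : a ∈ grade i) (hb : b ∈ grade j)
    (hc : c ∈ grade k) (hd : d ∈ grade l) :
    tortkaraDefect (envMul mul) (x ⊗ₜ a) (y ⊗ₜ b) (z ⊗ₜ c) (w ⊗ₜ d) =
      (x * y * z * w) ⊗ₜ[K] superTortkaraDefect mul i j k l a b c d := by
  rw [tortkaraDefect_envMul_tmul mul hx hy hz hw, superTortkaraDefect,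
    superCyclicJacobian_eq_superJacobian hgr hanti ha hb hc,
    superCyclicJacobian_eq_superJacobian hgr hanti ha hd hc,
    hanti _ _ _ (superJacobian_mem hgr ha hd hc) b hb, superJacobian_swap hanti hc hd,
    hanti k j c hc b hb]
  congr 1
  simp only [map_neg, map_smul]
  match_scalars
  all_goals
    rcases zmod_two_eq_zero_or_eq_one i with rfl | rfl <;>
    rcases zmod_two_eq_zero_or_eq_one j with rfl | rfl <;>
    rcases zmod_two_eq_zero_or_eq_one k with rfl | rfl <;>
    rcases zmod_two_eq_zero_or_eq_one l with rfl | rfl <;>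
    simp [show (1 + 1 : ZMod 2) = 0 from rfl]

theorem isSuperAntiComm_of_isAntiCommOn (h : IsAntiCommOn (envMul mul) (grassEnv grade)) :
    IsSuperAntiComm grade mul := by
  intro i j a ha b hb
  have hx := parityGen_mem (R := K) i 0
  have hy := parityGen_mem (R := K) j 1
  have hsum := envMul_add_envMul_swap_tmul mul hx hy a b
  rw [h _ (tmul_mem_grassEnv hx ha) _ (tmul_mem_grassEnv hy hb), neg_add_cancel] at hsum
  exact eq_neg_of_add_eq_zero_left (eq_zero_of_tmul_eq_zero (parityGen_mul_ne_zero i j) hsum.symm)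

include hanti in
theorem isAntiCommOn_of_isSuperAntiComm : IsAntiCommOn (envMul mul) (grassEnv grade) := by
  intro a ha b hb
  rw [grassEnv_eq_span] at ha hb
  refine eq_neg_of_add_eq_zero_left (add_swap_eq_zero_of_mem_span _ ?_ ha hb)
  rintro _ ⟨p, x, hx, t, ht, rfl⟩ _ ⟨q, y, hy, u, hu, rfl⟩
  rw [envMul_add_envMul_swap_tmul mul hx hy, hanti p q t ht u hu, neg_add_cancel, tmul_zero]

include hgr hanti in
theorem isSuperTortkara_of_isTortkaraOn (h : IsTortkaraOn (envMul mul) (grassEnv grade)) :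
    IsSuperTortkara grade mul := by
  intro i j k l a ha b hb c hc d hd
  have hx := parityGen_mem (R := K) i 0
  have hy := parityGen_mem (R := K) j 1
  have hz := parityGen_mem (R := K) k 2
  have hw := parityGen_mem (R := K) l 3
  have hdefect : tortkaraDefect (envMul mul) _ _ _ _ = 0 := sub_eq_zero.mpr
    (h _ (tmul_mem_grassEnv hx ha) _ (tmul_mem_grassEnv hy hb) _ (tmul_mem_grassEnv hz hc) _
      (tmul_mem_grassEnv hw hd))
  rw [tortkaraDefect_envMul_tmul_of_isSuperAntiComm mul hgr hanti hx hy hz hw ha hb hc hd]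
    at hdefect
  exact sub_eq_zero.mp (eq_zero_of_tmul_eq_zero (parityGen_mul₄_ne_zero i j k l) hdefect)

include hgr hanti in
theorem isTortkaraOn_of_isSuperTortkara (htort : IsSuperTortkara grade mul) :
    IsTortkaraOn (envMul mul) (grassEnv grade) := by
  intro a ha b hb c hc d hd
  rw [grassEnv_eq_span] at ha hb hc hd
  refine sub_eq_zero.mp (tortkaraDefect_eq_zero_of_mem_span _ ?_ ha hb hc hd)
  rintro _ ⟨i, x, hx, ta, hta, rfl⟩ _ ⟨j, y, hy, tb, htb, rfl⟩ _ ⟨k, z, hz, tc, htc, rfl⟩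
    _ ⟨l, w, hw, td, htd, rfl⟩
  rw [tortkaraDefect_envMul_tmul_of_isSuperAntiComm mul hgr hanti hx hy hz hw hta htb htc htd,
    superTortkaraDefect, sub_eq_zero.mpr (htort i j k l ta hta tb htb tc htc td htd), tmul_zero]

end Envelope

end GrassmannEnvelope

open GrassmannEnvelope in
theorem grassEnv_tortkara_iff_general {K T : Type*} [Field K]
    [AddCommGroup T] [Module K T]
    (grade : ZMod 2 → Submodule K T)
    (mul : T →ₗ[K] T →ₗ[K] T)
    (hgr : ∀ i j : ZMod 2, ∀ a ∈ grade i, ∀ b ∈ grade j, mul a b ∈ grade (i + j)) :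
    ((∀ a ∈ grassEnv (K := K) grade, ∀ b ∈ grassEnv (K := K) grade,
        envMul mul a b = -envMul mul b a) ∧
     (∀ a ∈ grassEnv (K := K) grade, ∀ b ∈ grassEnv (K := K) grade,
      ∀ c ∈ grassEnv (K := K) grade, ∀ d ∈ grassEnv (K := K) grade,
        envMul mul (envMul mul a b) (envMul mul c d) +
          envMul mul (envMul mul a d) (envMul mul c b) =
        envMul mul (envJ mul a b c) d + envMul mul (envJ mul a d c) b)) ↔
    ((∀ i j : ZMod 2, ∀ a ∈ grade i, ∀ b ∈ grade j,
        mul a b = -(((-1 : K) ^ (i.val * j.val)) • mul b a)) ∧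
     (∀ i j k l : ZMod 2, ∀ a ∈ grade i, ∀ b ∈ grade j, ∀ c ∈ grade k, ∀ d ∈ grade l,
        mul (mul a b) (mul c d) -
          ((-1 : K) ^ (l.val * ((j + k : ZMod 2)).val)) • mul (mul a d) (mul b c) =
        mul (mul (mul a b) c - mul a (mul b c) -
            ((-1 : K) ^ (j.val * k.val)) • mul (mul a c) b) d +
          ((-1 : K) ^ (i.val * j.val)) •
            mul b (mul (mul a c) d - mul a (mul c d) -
              ((-1 : K) ^ (k.val * l.val)) • mul (mul a d) c))) := by
  constructor
  · rintro ⟨hanti, htort⟩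
    have hsuper := isSuperAntiComm_of_isAntiCommOn mul hanti
    exact ⟨hsuper, isSuperTortkara_of_isTortkaraOn mul hgr hsuper htort⟩
  · rintro ⟨hanti, htort⟩
    exact ⟨isAntiCommOn_of_isSuperAntiComm mul hanti,
      isTortkaraOn_of_isSuperTortkara mul hgr hanti htort⟩

/-- `G(T)` is an anti-commutative Tortkara algebra if and only if `T`
is super anti-commutative and satisfies the super Tortkara identity. -/
theorem grassEnv_tortkara_iff {K T : Type*} [Field K] [CharZero K]
    [AddCommGroup T] [Module K T]
    (grade : ZMod 2 → Submodule K T)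
    (mul : T →ₗ[K] T →ₗ[K] T)
    (hgr : ∀ i j : ZMod 2, ∀ a ∈ grade i, ∀ b ∈ grade j, mul a b ∈ grade (i + j)) :
    ((∀ a ∈ grassEnv (K := K) grade, ∀ b ∈ grassEnv (K := K) grade,
        envMul mul a b = -envMul mul b a) ∧
     (∀ a ∈ grassEnv (K := K) grade, ∀ b ∈ grassEnv (K := K) grade,
      ∀ c ∈ grassEnv (K := K) grade, ∀ d ∈ grassEnv (K := K) grade,
        envMul mul (envMul mul a b) (envMul mul c d) +
          envMul mul (envMul mul a d) (envMul mul c b) =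
        envMul mul (envJ mul a b c) d + envMul mul (envJ mul a d c) b)) ↔
    ((∀ i j : ZMod 2, ∀ a ∈ grade i, ∀ b ∈ grade j,
        mul a b = -(((-1 : K) ^ (i.val * j.val)) • mul b a)) ∧
     (∀ i j k l : ZMod 2, ∀ a ∈ grade i, ∀ b ∈ grade j, ∀ c ∈ grade k, ∀ d ∈ grade l,
        mul (mul a b) (mul c d) -
          ((-1 : K) ^ (l.val * ((j + k : ZMod 2)).val)) • mul (mul a d) (mul b c) =
        mul (mul (mul a b) c - mul a (mul b c) -
            ((-1 : K) ^ (j.val * k.val)) • mul (mul a c) b) d +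
          ((-1 : K) ^ (i.val * j.val)) •
            mul b (mul (mul a c) d - mul a (mul c d) -
              ((-1 : K) ^ (k.val * l.val)) • mul (mul a d) c))) :=
  grassEnv_tortkara_iff_general grade mul hgr

end
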